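/- arXiv:2202.09399 — 2 statements merged into one kernel-verified Lean document; each statement's English description precedes it below -/
import Mathlib

section
/- Let E be a finite effect algebra with (pairwise distinct) atoms a_1,…,a_m, and let A = (y_{it}) ∈ M(E) be an n×m matrix whose rows enumerate Seq(E). If x ∈ E admits two representations x = k_1 a_1 ⊕ … ⊕ k_m a_m = l_1 a_1 ⊕ … ⊕ l_m a_m (with k_t, l_t ∈ ℕ, both orthosums defined), then there exist indices p, q with 1 ≤ p, q ≤ n such that for all 1 ≤ t ≤ m: k_t ≤ y_{pt}, l_t ≤ y_{qt}, and y_{pt} − k_t = y_{qt} − l_t. -/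
/-- An effect algebra: a set with 0, 1 and a partially defined binary
operation `⊕`, modeled as an `Option`-valued operation. -/
structure EffectAlgebra (E : Type*) where
  oplus : E → E → Option E
  zero : E
  one : E
  comm : ∀ p q, oplus p q = oplus q p
  assoc : ∀ p q r s qr, oplus q r = some qr → oplus p qr = some s →
    ∃ pq, oplus p q = some pq ∧ oplus pq r = some s
  orthosupp : ∀ p, ∃! q, oplus p q = some one
  zero_unit : ∀ p q, oplus one p = some q → p = zero

namespace EffectAlgebra

variable {E : Type*}

/-- `p ≤ q` iff there is `r` with `p ⊕ r` defined and equal to `q`. -/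
def le (W : EffectAlgebra E) (p q : E) : Prop := ∃ r, W.oplus p r = some q

/-- An atom is a minimal element of `E \ {0}`. -/
def IsAtomElem (W : EffectAlgebra E) (x : E) : Prop :=
  x ≠ W.zero ∧ ∀ y : E, W.le y x → y ≠ W.zero → y = x

/-- Partial orthosum of a list of elements. -/
def listSum (W : EffectAlgebra E) : List E → Option E
  | [] => some W.zero
  | x :: xs => (listSum W xs).bind (fun y => W.oplus x y)

/-- The orthosum `k 0 • a 0 ⊕ ⋯ ⊕ k (m-1) • a (m-1)`, when defined. -/
def mulSum (W : EffectAlgebra E) {m : ℕ} (a : Fin m → E) (k : Fin m → ℕ) : Option E :=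
  W.listSum ((List.ofFn (fun t => List.replicate (k t) (a t))).flatten)

/-- `Seq(E)`: tuples `k` with `⨁ k t • a t` defined and equal to `1`. -/
def SeqSet (W : EffectAlgebra E) {m : ℕ} (a : Fin m → E) : Set (Fin m → ℕ) :=
  {k | W.mulSum a k = some W.one}

/-- `a : Fin m → E` enumerates the atoms of `E` without repetition. -/
def AtomFamily (W : EffectAlgebra E) {m : ℕ} (a : Fin m → E) : Prop :=
  Function.Injective a ∧ (∀ t, W.IsAtomElem (a t)) ∧
    ∀ x : E, W.IsAtomElem x → ∃ t, x = a t

/-- `A ∈ M(E)`: the rows of `A` are pairwise distinct and enumerate `Seq(E)`. -/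
def MemM (W : EffectAlgebra E) {m n : ℕ} (a : Fin m → E) (A : Matrix (Fin n) (Fin m) ℕ) : Prop :=
  (∀ i j : Fin n, i ≠ j → ∃ t, A i t ≠ A j t) ∧
    {k : Fin m → ℕ | ∃ i, A i = k} = W.SeqSet a

/-- A state on an effect algebra. -/
def IsState (W : EffectAlgebra E) (s : E → ℝ) : Prop :=
  (∀ x, 0 ≤ s x ∧ s x ≤ 1) ∧ s W.one = 1 ∧
    ∀ p q r, W.oplus p q = some r → s p + s q ≤ 1 ∧ s r = s p + s q

end EffectAlgebra

/-- `(A|1)`: the matrix `A` augmented by a column of ones. -/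
def augmentOnes {n m : ℕ} {R : Type*} [One R] (A : Matrix (Fin n) (Fin m) R) :
    Matrix (Fin n) (Fin (m + 1)) R :=
  Matrix.of fun i j => if h : (j : ℕ) < m then A i ⟨j, h⟩ else 1

namespace EffectAlgebra

variable {E : Type*} (W : EffectAlgebra E)

/-- The other form of associativity. -/
lemma assoc' {p q r s pq : E} (h1 : W.oplus p q = some pq) (h2 : W.oplus pq r = some s) :
    ∃ qr, W.oplus q r = some qr ∧ W.oplus p qr = some s := by
  have h1' : W.oplus q p = some pq := by rw [W.comm]; exact h1
  have h2' : W.oplus r pq = some s := by rw [W.comm]; exact h2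
  obtain ⟨rq, hrq1, hrq2⟩ := W.assoc r q p s pq h1' h2'
  exact ⟨rq, by rw [W.comm]; exact hrq1, by rw [W.comm]; exact hrq2⟩

lemma one_oplus_zero : W.oplus W.one W.zero = some W.one := by
  obtain ⟨q, hq, -⟩ := W.orthosupp W.one
  have := W.zero_unit q W.one hq
  rwa [this] at hq

lemma zero_oplus (x : E) : W.oplus W.zero x = some x := by
  obtain ⟨x', hx', -⟩ := W.orthosupp x
  have h01 : W.oplus W.zero W.one = some W.one := by rw [W.comm]; exact W.one_oplus_zero
  obtain ⟨pq, hpq1, hpq2⟩ := W.assoc W.zero x x' W.one W.one hx' h01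
  obtain ⟨w, hw, huniq⟩ := W.orthosupp x'
  have e1 : pq = w := huniq pq (show W.oplus x' pq = some W.one by rw [W.comm]; exact hpq2)
  have e2 : x = w := huniq x (show W.oplus x' x = some W.one by rw [W.comm]; exact hx')
  rw [hpq1, e1, ← e2]

lemma oplus_zero (x : E) : W.oplus x W.zero = some x := by
  rw [W.comm]; exact W.zero_oplus x

/-- Cancellation. -/
lemma cancel {u b c d : E} (h1 : W.oplus u b = some d) (h2 : W.oplus u c = some d) :
    b = c := by
  obtain ⟨d', hd', -⟩ := W.orthosupp d
  have hd'' : W.oplus d' d = some W.one := by rw [W.comm]; exact hd'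
  obtain ⟨e1, he11, he12⟩ := W.assoc d' u b W.one d h1 hd''
  obtain ⟨e2, he21, he22⟩ := W.assoc d' u c W.one d h2 hd''
  have he : e1 = e2 := by rw [he11] at he21; exact (Option.some.injEq _ _).mp he21
  obtain ⟨w, hw, huniq⟩ := W.orthosupp e1
  have hb := huniq b he12
  have hc := huniq c (he ▸ he22)
  rw [hb, hc]

lemma le_refl' (x : E) : W.le x x := ⟨W.zero, W.oplus_zero x⟩

lemma le_trans' {x y z : E} (h1 : W.le x y) (h2 : W.le y z) : W.le x z := by
  obtain ⟨r, hr⟩ := h1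
  obtain ⟨s, hs⟩ := h2
  obtain ⟨rs, hrs1, hrs2⟩ := W.assoc' hr hs
  exact ⟨rs, hrs2⟩

lemma eq_zero_of_oplus_self {r x : E} (h : W.oplus x r = some x) : r = W.zero :=
  W.cancel h (W.oplus_zero x)

lemma le_antisymm' {x y : E} (h1 : W.le x y) (h2 : W.le y x) : x = y := by
  obtain ⟨r, hr⟩ := h1
  obtain ⟨s, hs⟩ := h2
  obtain ⟨rs, hrs1, hrs2⟩ := W.assoc' hr hs
  have h0 : rs = W.zero := W.eq_zero_of_oplus_self hrs2
  rw [h0] at hrs1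
  -- from r ⊕ s = 0 deduce s = 0
  have h01 : W.oplus W.zero W.one = some W.one := by rw [W.comm]; exact W.one_oplus_zero
  obtain ⟨s1, hs11, hs12⟩ := W.assoc' hrs1 h01
  have hs0 : s = W.zero := W.zero_unit s s1 (by rw [W.comm]; exact hs11)
  rw [hs0, W.oplus_zero] at hs
  exact ((Option.some.injEq _ _).mp hs).symm

/-- Exchange lemma for nested binds. -/
lemma exch {x y s v : E} (h : ((W.oplus y s).bind fun u => W.oplus x u) = some v) :
    ((W.oplus x s).bind fun u => W.oplus y u) = some v := by
  cases h1 : W.oplus y s with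
  | none => rw [h1] at h; simp at h
  | some u =>
    rw [h1] at h; simp only [Option.bind_some] at h
    obtain ⟨xy, hxy1, hxy2⟩ := W.assoc x y s v u h1 h
    have hxy1' : W.oplus y x = some xy := by rw [W.comm]; exact hxy1
    obtain ⟨xs, hxs1, hxs2⟩ := W.assoc' hxy1' hxy2
    rw [hxs1]; simpa using hxs2

lemma bind_comm' (x y : E) (o : Option E) :
    (o.bind fun s => (W.oplus y s).bind fun u => W.oplus x u) =
      (o.bind fun s => (W.oplus x s).bind fun u => W.oplus y u) := by
  cases o with
  | none => rfl
  | some s =>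
    simp only [Option.bind_some]
    cases hA : ((W.oplus y s).bind fun u => W.oplus x u) with
    | none =>
      cases hB : ((W.oplus x s).bind fun u => W.oplus y u) with
      | none => rfl
      | some v => rw [W.exch hB] at hA; simp at hA
    | some v => exact (W.exch hA).symm

/-- `listSum` is invariant under permutations. -/
lemma listSum_perm {L₁ L₂ : List E} (h : L₁.Perm L₂) : W.listSum L₁ = W.listSum L₂ := by
  induction h with
  | nil => rfl
  | cons x _ ih => simp only [listSum, ih]
  | swap x y l =>
    show ((W.listSum l).bind fun s => W.oplus x s).bind (fun u => W.oplus y u) =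
      ((W.listSum l).bind fun s => W.oplus y s).bind (fun u => W.oplus x u)
    rw [Option.bind_assoc, Option.bind_assoc]
    exact (W.bind_comm' y x (W.listSum l))
  | trans _ _ ih1 ih2 => rw [ih1, ih2]

lemma listSum_append {L₁ L₂ : List E} {u z w : E} (h1 : W.listSum L₁ = some u)
    (h2 : W.listSum L₂ = some z) (h3 : W.oplus u z = some w) :
    W.listSum (L₁ ++ L₂) = some w := by
  induction L₁ generalizing u w with
  | nil =>
    simp only [listSum] at h1
    have : u = W.zero := ((Option.some.injEq _ _).mp h1).symm
    rw [this, W.zero_oplus] at h3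
    have : z = w := (Option.some.injEq _ _).mp h3
    simpa [this] using h2
  | cons hd tl ih =>
    rw [List.cons_append]
    simp only [listSum] at h1 ⊢
    cases ht : W.listSum tl with
    | none => rw [ht] at h1; simp at h1
    | some u' =>
      rw [ht] at h1; simp only [Option.bind_some] at h1
      obtain ⟨v, hv1, hv2⟩ := W.assoc' h1 h3
      rw [ih ht hv1]
      simpa using hv2

end EffectAlgebra

section ListLemmas

variable {α : Type*}

lemma flatten_ofFn_nil : ∀ m : ℕ, (List.ofFn fun _ : Fin m => ([] : List α)).flatten = [] := by
  intro m
  induction m with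
  | zero => simp
  | succ m ih => simp [List.ofFn_succ, ih]

lemma flatten_ofFn_ite (v : α) : ∀ (m : ℕ) (t : Fin m),
    (List.ofFn fun s => if s = t then [v] else ([] : List α)).flatten = [v] := by
  intro m
  induction m with
  | zero => exact fun t => t.elim0
  | succ m ih =>
    intro t
    induction t using Fin.cases with
    | zero =>
      have h1 : (List.ofFn fun i : Fin m =>
          if (i.succ : Fin (m + 1)) = 0 then [v] else ([] : List α)) =
          List.ofFn fun _ : Fin m => ([] : List α) := by
        have hf : (fun i : Fin m => if (i.succ : Fin (m + 1)) = 0 then [v]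
            else ([] : List α)) = fun _ : Fin m => ([] : List α) := by
          funext i; simp [Fin.succ_ne_zero]
        rw [hf]
      simp only [List.ofFn_succ, List.flatten_cons, h1, flatten_ofFn_nil]
      simp
    | succ j =>
      have h1 : (List.ofFn fun i : Fin m =>
          if (i.succ : Fin (m + 1)) = j.succ then [v] else ([] : List α)) =
          List.ofFn fun i : Fin m => if i = j then [v] else ([] : List α) := by
        have hf : (fun i : Fin m => if (i.succ : Fin (m + 1)) = j.succ then [v]
            else ([] : List α)) =
            fun i : Fin m => if i = j then [v] else ([] : List α) := by
          funext i; simp [Fin.succ_inj]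
        rw [hf]
      simp only [List.ofFn_succ, List.flatten_cons, h1, ih j]
      simp [(Fin.succ_ne_zero j).symm]

lemma flatten_add_perm : ∀ (m : ℕ) (f g : Fin m → List α),
    ((List.ofFn fun t => f t ++ g t).flatten).Perm
      ((List.ofFn f).flatten ++ (List.ofFn g).flatten) := by
  intro m
  induction m with
  | zero => intro f g; simp
  | succ m ih =>
    intro f g
    classical
    simp only [List.ofFn_succ, List.flatten_cons]
    have IH := ih (fun i => f i.succ) (fun i => g i.succ)
    set F := (List.ofFn fun i : Fin m => f i.succ).flatten with hF
    set G := (List.ofFn fun i : Fin m => g i.succ).flatten with hG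
    have step1 : ((f 0 ++ g 0) ++
        (List.ofFn fun i : Fin m => f i.succ ++ g i.succ).flatten).Perm
        ((f 0 ++ g 0) ++ (F ++ G)) := IH.append_left _
    have step2 : ((f 0 ++ g 0) ++ (F ++ G)).Perm ((f 0 ++ F) ++ (g 0 ++ G)) := by
      rw [List.perm_iff_count]
      intro v
      simp only [List.count_append]
      omega
    exact step1.trans step2

end ListLemmas

namespace EffectAlgebra

variable {E : Type*} (W : EffectAlgebra E)

lemma mulSum_zero {m : ℕ} (a : Fin m → E) :
    W.mulSum a (fun _ => 0) = some W.zero := by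
  unfold mulSum
  have : (List.ofFn fun t => List.replicate 0 (a t)) =
      List.ofFn fun _ : Fin m => ([] : List E) := by
    congr 1
  rw [this, flatten_ofFn_nil]
  rfl

lemma mulSum_single {m : ℕ} (a : Fin m → E) (t : Fin m) :
    W.mulSum a (fun s => if s = t then 1 else 0) = some (a t) := by
  unfold mulSum
  have : (List.ofFn fun s => List.replicate (if s = t then 1 else 0) (a s)) =
      List.ofFn fun s => if s = t then [a t] else ([] : List E) := by
    congr 1; funext s
    by_cases h : s = t
    · subst h; simp
    · simp [h]
  rw [this, flatten_ofFn_ite]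
  show (W.listSum []).bind (fun y => W.oplus (a t) y) = some (a t)
  simp only [listSum, Option.bind_some]
  exact W.oplus_zero (a t)

lemma mulSum_add {m : ℕ} {a : Fin m → E} {k c : Fin m → ℕ} {u z x : E}
    (hk : W.mulSum a k = some u) (hc : W.mulSum a c = some z)
    (hx : W.oplus u z = some x) :
    W.mulSum a (fun t => k t + c t) = some x := by
  unfold mulSum at hk hc ⊢
  have hrep : (List.ofFn fun t => List.replicate (k t + c t) (a t)) =
      List.ofFn fun t => List.replicate (k t) (a t) ++ List.replicate (c t) (a t) := by
    congr 1; funext t; rw [List.replicate_add]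
  rw [hrep]
  have hperm := flatten_add_perm m (fun t => List.replicate (k t) (a t))
    (fun t => List.replicate (c t) (a t))
  rw [W.listSum_perm hperm]
  exact W.listSum_append hk hc hx

/-- Every element of a finite effect algebra is an orthosum of multiples of atoms. -/
lemma exists_rep [Finite E] {m : ℕ} (a : Fin m → E) (ha : W.AtomFamily a) (x : E) :
    ∃ c : Fin m → ℕ, W.mulSum a c = some x := by
  have hwf : WellFounded (fun u v : E => W.le u v ∧ u ≠ v) := by
    have htrans : IsTrans E (fun u v : E => W.le u v ∧ u ≠ v) := by
      constructor
      rintro u v w ⟨huv, hne1⟩ ⟨hvw, hne2⟩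
      refine ⟨W.le_trans' huv hvw, fun h => ?_⟩
      subst h
      exact hne2 (W.le_antisymm' hvw huv)
    have hirrefl : IsIrrefl E (fun u v : E => W.le u v ∧ u ≠ v) := by
      constructor; rintro u ⟨-, h⟩; exact h rfl
    exact @Finite.wellFounded_of_trans_of_irrefl E _ _ htrans hirrefl
  induction x using hwf.induction with
  | _ x IH =>
    by_cases hx0 : x = W.zero
    · exact ⟨fun _ => 0, by rw [hx0]; exact W.mulSum_zero a⟩
    · -- find a minimal nonzero element below x : an atom
      have hxS : x ∈ {y : E | y ≠ W.zero ∧ W.le y x} := ⟨hx0, W.le_refl' x⟩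
      obtain ⟨y, hyS, hymin⟩ := hwf.has_min {y : E | y ≠ W.zero ∧ W.le y x} ⟨x, hxS⟩
      have hatom : W.IsAtomElem y := by
        refine ⟨hyS.1, fun z hzy hz0 => ?_⟩
        by_contra hne
        exact hymin z ⟨hz0, W.le_trans' hzy hyS.2⟩ ⟨hzy, hne⟩
      obtain ⟨t, hyt⟩ := ha.2.2 y hatom
      obtain ⟨z, hz⟩ := hyS.2
      have hzx : z ≠ x := by
        intro h
        subst h
        have h1 : W.oplus z y = some z := by rw [W.comm]; exact hz
        exact hyS.1 (W.eq_zero_of_oplus_self h1)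
      have hlez : W.le z x := ⟨y, by rw [W.comm]; exact hz⟩
      obtain ⟨c, hc⟩ := IH z ⟨hlez, hzx⟩
      have hat : W.oplus (a t) z = some x := by rw [← hyt]; exact hz
      exact ⟨_, W.mulSum_add (W.mulSum_single a t) hc hat⟩

end EffectAlgebra

/-- Lemma 8 (`kl`): if `x` has two representations `⨁ k t • a t = ⨁ l t • a t`,
then there are rows `p, q` of `A ∈ M(E)` dominating `k` and `l` respectively,
with equal componentwise differences. -/
theorem two_representations_rows {E : Type*} [Fintype E] (W : EffectAlgebra E)
    {m n : ℕ} (a : Fin m → E) (ha : W.AtomFamily a)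
    (A : Matrix (Fin n) (Fin m) ℕ) (hA : W.MemM a A)
    (x : E) (k l : Fin m → ℕ)
    (hk : W.mulSum a k = some x) (hl : W.mulSum a l = some x) :
    ∃ p q : Fin n, ∀ t : Fin m,
      k t ≤ A p t ∧ l t ≤ A q t ∧ A p t - k t = A q t - l t := by
  obtain ⟨x', hx', -⟩ := W.orthosupp x
  obtain ⟨c, hc⟩ := W.exists_rep a ha x'
  have h1 : W.mulSum a (fun t => k t + c t) = some W.one := W.mulSum_add hk hc hx'
  have h2 : W.mulSum a (fun t => l t + c t) = some W.one := W.mulSum_add hl hc hx'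
  have hm1 : (fun t => k t + c t) ∈ {k : Fin m → ℕ | ∃ i, A i = k} := by
    rw [hA.2]; exact h1
  have hm2 : (fun t => l t + c t) ∈ {k : Fin m → ℕ | ∃ i, A i = k} := by
    rw [hA.2]; exact h2
  obtain ⟨p, hp⟩ := hm1
  obtain ⟨q, hq⟩ := hm2
  refine ⟨p, q, fun t => ?_⟩
  have hp' := congrFun hp t
  have hq' := congrFun hq t
  omega
end

section
/- Let E be a finite effect algebra with exactly twelve pairwise distinct atoms a_1,…,a_12 such that a_1⊕a_2⊕a_3⊕a_4 = 1, a_5⊕a_6⊕a_7⊕a_8 = 1, a_9⊕a_10⊕a_11⊕a_12 = 1, a_1⊕a_5⊕a_9 = 1, a_2⊕a_6⊕a_10 = 1, a_3⊕a_7⊕a_11 = 1, a_4⊕a_8⊕a_12 = 1, and such that Seq(E) consists exactly of the seven corresponding 0–1 vectors in ℕ^12 (the seven rows of the incidence matrix of these relations). Then E has no state. -/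
/-!
A state is additive along orthosums, so each relation `⨁ G i t • a t = 1` says that the values
of the state on the atoms of row `i` add up to `1`. Rows `0, 1, 2` cover every atom exactly once,
and so do rows `3, 4, 5, 6`; summing the relations over either block gives the total mass
`∑ t, s (a t)` of the atoms, which would therefore equal both `3` and `4`.
-/

namespace EffectAlgebra

variable {E : Type*} {W : EffectAlgebra E} {s : E → ℝ}

theorem IsState.map_zero (hs : W.IsState s) : s W.zero = 0 := by
  obtain ⟨q, hq, -⟩ := W.orthosupp W.one
  obtain rfl := W.zero_unit q W.one hq
  linarith [(hs.2.2 W.one W.zero W.one hq).2]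

theorem IsState.map_listSum (hs : W.IsState s) {l : List E} {x : E}
    (hx : W.listSum l = some x) : s x = (l.map s).sum := by
  induction l generalizing x with
  | nil =>
    obtain rfl : W.zero = x := Option.some.inj hx
    simp [hs.map_zero]
  | cons y ys ih =>
    obtain ⟨z, hz, hyz⟩ := Option.bind_eq_some_iff.mp hx
    rw [(hs.2.2 y z x hyz).2, ih hz, List.map_cons, List.sum_cons]

theorem IsState.map_mulSum (hs : W.IsState s) {m : ℕ} {a : Fin m → E} {k : Fin m → ℕ} {x : E}
    (hx : W.mulSum a k = some x) : s x = ∑ t, (k t : ℝ) * s (a t) := by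
  rw [hs.map_listSum hx, List.map_flatten, List.map_ofFn, List.sum_flatten, List.map_ofFn,
    List.sum_ofFn]
  simp [List.map_replicate, List.sum_replicate]

theorem IsState.card_eq_sum_atoms (hs : W.IsState s) {m n : ℕ} {a : Fin m → E}
    {G : Fin n → Fin m → ℕ} {I : Finset (Fin n)}
    (hrel : ∀ i ∈ I, W.mulSum a (G i) = some W.one) (hI : ∑ i ∈ I, G i = 1) :
    (I.card : ℝ) = ∑ t, s (a t) :=
  calc (I.card : ℝ)
      = ∑ i ∈ I, ∑ t, (G i t : ℝ) * s (a t) := by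
        rw [Finset.card_eq_sum_ones, Nat.cast_sum]
        refine Finset.sum_congr rfl fun i hi => ?_
        rw [← hs.map_mulSum (hrel i hi), hs.2.1, Nat.cast_one]
    _ = ∑ t, ((∑ i ∈ I, G i) t : ℝ) * s (a t) := by
        rw [Finset.sum_comm]
        simp only [Finset.sum_apply, Nat.cast_sum, Finset.sum_mul]
    _ = ∑ t, s (a t) := by simp only [hI, Pi.one_apply, Nat.cast_one, one_mul]

end EffectAlgebra

theorem greechie_no_state_general {E : Type*} (W : EffectAlgebra E)
    (a : Fin 12 → E)
    (G : Matrix (Fin 7) (Fin 12) ℕ)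
    (hG : G = !![1,1,1,1,0,0,0,0,0,0,0,0;
                 0,0,0,0,1,1,1,1,0,0,0,0;
                 0,0,0,0,0,0,0,0,1,1,1,1;
                 1,0,0,0,1,0,0,0,1,0,0,0;
                 0,1,0,0,0,1,0,0,0,1,0,0;
                 0,0,1,0,0,0,1,0,0,0,1,0;
                 0,0,0,1,0,0,0,1,0,0,0,1])
    (hrel : ∀ i : Fin 7, W.mulSum a (G i) = some W.one) :
    ¬ ∃ h : E → ℝ, W.IsState h := by
  rintro ⟨s, hs⟩
  subst hG
  have three : ((3 : ℕ) : ℝ) = ∑ t, s (a t) :=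
    hs.card_eq_sum_atoms (I := {0, 1, 2}) (fun i _ => hrel i) (by decide)
  have four : ((4 : ℕ) : ℝ) = ∑ t, s (a t) :=
    hs.card_eq_sum_atoms (I := {3, 4, 5, 6}) (fun i _ => hrel i) (by decide)
  norm_num at three four
  linarith

/-- Greechie's example: a finite effect algebra with twelve atoms satisfying
the seven orthosum relations, whose `Seq(E)` consists exactly of the seven
corresponding 0-1 vectors, has no state. -/
theorem greechie_no_state {E : Type*} [Fintype E] (W : EffectAlgebra E)
    (a : Fin 12 → E) (ha : W.AtomFamily a)
    (G : Matrix (Fin 7) (Fin 12) ℕ)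
    (hG : G = !![1,1,1,1,0,0,0,0,0,0,0,0;
                 0,0,0,0,1,1,1,1,0,0,0,0;
                 0,0,0,0,0,0,0,0,1,1,1,1;
                 1,0,0,0,1,0,0,0,1,0,0,0;
                 0,1,0,0,0,1,0,0,0,1,0,0;
                 0,0,1,0,0,0,1,0,0,0,1,0;
                 0,0,0,1,0,0,0,1,0,0,0,1])
    (hrel : ∀ i : Fin 7, W.mulSum a (G i) = some W.one)
    (hSeq : W.SeqSet a = {k : Fin 12 → ℕ | ∃ i : Fin 7, k = G i}) :
    ¬ ∃ h : E → ℝ, W.IsState h :=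
  greechie_no_state_general W a G hG hrel
end
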